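/- arXiv:1608.04636 — 9 statements merged into one kernel-verified Lean document; each statement's English description precedes it below -/
import Mathlib

section
/- If f: ℝ^d → ℝ is differentiable with L-Lipschitz continuous gradient, has a nonempty set of minimizers with optimal value f*, and satisfies the Polyak-Łojasiewicz inequality (1/2)‖∇f(x)‖² ≥ μ(f(x) − f*) for all x with μ > 0, then the gradient descent iterates x_{k+1} = x_k − (1/L)∇f(x_k) satisfy f(x_k) − f* ≤ (1 − μ/L)^k (f(x_0) − f*). -/
open RealInnerProductSpace

theorem pl_gradient_descent_linear_convergence
    {d : ℕ} (f : EuclideanSpace ℝ (Fin d) → ℝ) (L μ fstar : ℝ)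
    (hL : 0 < L) (hμ : 0 < μ) (hμL : μ ≤ L)
    (hdiff : Differentiable ℝ f)
    (hlip : ∀ x y, f y ≤ f x + ⟪gradient f x, y - x⟫ + L / 2 * ‖y - x‖ ^ 2)
    (hmin : ∃ z, f z = fstar ∧ ∀ y, fstar ≤ f y)
    (hPL : ∀ x, μ * (f x - fstar) ≤ 1 / 2 * ‖gradient f x‖ ^ 2)
    (x : ℕ → EuclideanSpace ℝ (Fin d))
    (hx : ∀ k, x (k + 1) = x k - (1 / L) • gradient f (x k)) :
    ∀ k, f (x k) - fstar ≤ (1 - μ / L) ^ k * (f (x 0) - fstar) := by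
  have hstep : ∀ k, f (x (k+1)) - fstar ≤ (1 - μ / L) * (f (x k) - fstar) := by
    intro k
    set g := gradient f (x k) with hg
    have hle := hlip (x k) (x (k+1))
    rw [hx k] at hle
    have hd : x k - (1 / L) • g - x k = -((1 / L) • g) := by abel
    rw [hd] at hle
    have hinner : ⟪g, -((1 / L) • g)⟫ = -(1 / L * ‖g‖ ^ 2) := by
      rw [inner_neg_right, real_inner_smul_right, real_inner_self_eq_norm_sq]
    have hnorm : ‖-((1 / L) • g)‖ ^ 2 = (1 / L) ^ 2 * ‖g‖ ^ 2 := by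
      rw [norm_neg, norm_smul]
      rw [Real.norm_eq_abs, abs_of_pos (one_div_pos.mpr hL)]
      ring
    rw [hinner, hnorm] at hle
    have key : f (x (k+1)) ≤ f (x k) - 1 / (2 * L) * ‖g‖ ^ 2 := by
      rw [hx k]
      calc f (x k - (1 / L) • g) ≤ f (x k) + -(1 / L * ‖g‖ ^ 2) + L / 2 * ((1 / L) ^ 2 * ‖g‖ ^ 2) := hle
        _ = f (x k) - 1 / (2 * L) * ‖g‖ ^ 2 := by field_simp; ring
    have hpl := hPL (x k)
    have h1 : 1 / (2 * L) * (2 * μ * (f (x k) - fstar)) ≤ 1 / (2 * L) * ‖g‖ ^ 2 := by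
      apply mul_le_mul_of_nonneg_left _ (by positivity)
      nlinarith
    have h2 : 1 / (2 * L) * (2 * μ * (f (x k) - fstar)) = μ / L * (f (x k) - fstar) := by
      field_simp
    have h3 : (1 - μ / L) * (f (x k) - fstar) = (f (x k) - fstar) - μ / L * (f (x k) - fstar) := by
      ring
    linarith
  intro k
  induction k with
  | zero => simp
  | succ n ih =>
    calc f (x (n+1)) - fstar ≤ (1 - μ / L) * (f (x n) - fstar) := hstep n
      _ ≤ (1 - μ / L) * ((1 - μ / L) ^ n * (f (x 0) - fstar)) := by
          apply mul_le_mul_of_nonneg_left ih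
          have : μ / L ≤ 1 := (div_le_one hL).mpr hμL
          linarith
      _ = (1 - μ / L) ^ (n+1) * (f (x 0) - fstar) := by ring
end

section
/- If f: ℝ^d → ℝ satisfies the restricted secant inequality ⟨∇f(x), x − x_p⟩ ≥ μ‖x − x_p‖² for all x (where x_p is the projection of x onto the solution set), then f satisfies the error bound condition ‖∇f(x)‖ ≥ μ‖x − x_p‖ for all x. -/
open RealInnerProductSpace

theorem rsi_implies_error_bound
    {d : ℕ} (f : EuclideanSpace ℝ (Fin d) → ℝ) (μ : ℝ) (hμ : 0 < μ)
    (hdiff : Differentiable ℝ f)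
    (S : Set (EuclideanSpace ℝ (Fin d)))
    (hS : S = {z | ∀ y, f z ≤ f y}) (hSne : S.Nonempty) (hSclosed : IsClosed S)
    (p : EuclideanSpace ℝ (Fin d) → EuclideanSpace ℝ (Fin d))
    (hproj : ∀ x, p x ∈ S ∧ ∀ y ∈ S, ‖x - p x‖ ≤ ‖x - y‖)
    (hRSI : ∀ x, μ * ‖x - p x‖ ^ 2 ≤ ⟪gradient f x, x - p x⟫) :
    ∀ x, μ * ‖x - p x‖ ≤ ‖gradient f x‖ := by
  intro x
  rcases eq_or_lt_of_le (norm_nonneg (x - p x)) with h | h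
  · rw [← h]; simp [norm_nonneg]
  · have h1 := hRSI x
    have h2 : ⟪gradient f x, x - p x⟫ ≤ ‖gradient f x‖ * ‖x - p x‖ :=
      real_inner_le_norm _ _
    have : μ * ‖x - p x‖ ^ 2 ≤ ‖gradient f x‖ * ‖x - p x‖ := h1.trans h2
    nlinarith
end

section
/- If f: ℝ^d → ℝ is convex and satisfies the quadratic growth condition f(x) − f* ≥ (μ/2)‖x − x_p‖² for all x, then f satisfies the restricted secant inequality ⟨∇f(x), x − x_p⟩ ≥ (μ/2)‖x − x_p‖² for all x. -/
/-!
Restricting a differentiable convex function to a line gives the first-order condition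
`f x + f' (y - x) ≤ f y`. At `y = x_p` this reads `f x - f* ≤ ⟪∇f x, x - x_p⟫`, and quadratic growth
bounds the left-hand side from below by `μ/2 ‖x - x_p‖²`.
-/

open RealInnerProductSpace

theorem ConvexOn.add_fderiv_sub_le {E : Type*} [NormedAddCommGroup E] [NormedSpace ℝ E]
    {s : Set E} {f : E → ℝ} {f' : E →L[ℝ] ℝ} {x y : E} (hf : ConvexOn ℝ s f)
    (hx : x ∈ s) (hy : y ∈ s) (hf' : HasFDerivAt f f' x) :
    f x + f' (y - x) ≤ f y := by
  have hline : ConvexOn ℝ (AffineMap.lineMap (k := ℝ) x y ⁻¹' s)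
      (f ∘ AffineMap.lineMap (k := ℝ) x y) :=
    hf.comp_affineMap _
  have hderiv : HasDerivAt (f ∘ AffineMap.lineMap (k := ℝ) x y) (f' (y - x)) 0 := by
    have hf'0 : HasFDerivAt f f' (AffineMap.lineMap x y (0 : ℝ)) := by simpa using hf'
    exact hf'0.comp_hasDerivAt 0 AffineMap.hasDerivAt_lineMap
  have hslope := hline.le_slope_of_hasDerivAt (by simpa using hx) (by simpa using hy)
    zero_lt_one hderiv
  simp only [slope_def_field, Function.comp_apply, AffineMap.lineMap_apply_zero,
    AffineMap.lineMap_apply_one, sub_zero, div_one] at hslope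
  linarith

theorem ConvexOn.sub_le_inner_of_hasGradientAt {F : Type*} [NormedAddCommGroup F]
    [InnerProductSpace ℝ F] [CompleteSpace F] {s : Set F} {f : F → ℝ} {g x y : F}
    (hf : ConvexOn ℝ s f) (hx : x ∈ s) (hy : y ∈ s) (hg : HasGradientAt f g x) :
    f x - f y ≤ ⟪g, x - y⟫ := by
  have h := hf.add_fderiv_sub_le hx hy hg.hasFDerivAt
  rw [InnerProductSpace.toDual_apply_apply, inner_sub_right] at h
  rw [inner_sub_right]
  linarith

theorem qg_convex_implies_rsi_general
    {d : ℕ} (f : EuclideanSpace ℝ (Fin d) → ℝ) (μ fstar : ℝ)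
    (hdiff : Differentiable ℝ f)
    (hconv : ConvexOn ℝ Set.univ f)
    (S : Set (EuclideanSpace ℝ (Fin d)))
    (hfstar : ∀ z ∈ S, f z = fstar)
    (p : EuclideanSpace ℝ (Fin d) → EuclideanSpace ℝ (Fin d))
    (hproj : ∀ x, p x ∈ S ∧ ∀ y ∈ S, ‖x - p x‖ ≤ ‖x - y‖)
    (hQG : ∀ x, μ / 2 * ‖x - p x‖ ^ 2 ≤ f x - fstar) :
    ∀ x, μ / 2 * ‖x - p x‖ ^ 2 ≤ ⟪gradient f x, x - p x⟫ := by
  intro x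
  have hfp : f (p x) = fstar := hfstar _ (hproj x).1
  calc μ / 2 * ‖x - p x‖ ^ 2 ≤ f x - f (p x) := hfp ▸ hQG x
    _ ≤ ⟪gradient f x, x - p x⟫ :=
      hconv.sub_le_inner_of_hasGradientAt trivial trivial (hdiff x).hasGradientAt

theorem qg_convex_implies_rsi
    {d : ℕ} (f : EuclideanSpace ℝ (Fin d) → ℝ) (μ fstar : ℝ) (hμ : 0 < μ)
    (hdiff : Differentiable ℝ f)
    (hconv : ConvexOn ℝ Set.univ f)
    (S : Set (EuclideanSpace ℝ (Fin d)))
    (hS : S = {z | ∀ y, f z ≤ f y}) (hSne : S.Nonempty)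
    (hfstar : ∀ z ∈ S, f z = fstar)
    (p : EuclideanSpace ℝ (Fin d) → EuclideanSpace ℝ (Fin d))
    (hproj : ∀ x, p x ∈ S ∧ ∀ y ∈ S, ‖x - p x‖ ≤ ‖x - y‖)
    (hQG : ∀ x, μ / 2 * ‖x - p x‖ ^ 2 ≤ f x - fstar) :
    ∀ x, μ / 2 * ‖x - p x‖ ^ 2 ≤ ⟪gradient f x, x - p x⟫ :=
  qg_convex_implies_rsi_general f μ fstar hdiff hconv S hfstar p hproj hQG
end

section
/- If f: ℝ^d → ℝ satisfies weak strong convexity, i.e., f* ≥ f(x) + ⟨∇f(x), x_p − x⟩ + (μ/2)‖x_p − x‖² for all x, then f satisfies the restricted secant inequality ⟨∇f(x), x − x_p⟩ ≥ (μ/2)‖x − x_p‖² for all x. -/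
open RealInnerProductSpace

theorem wsc_implies_rsi
    {d : ℕ} (f : EuclideanSpace ℝ (Fin d) → ℝ) (μ fstar : ℝ) (hμ : 0 < μ)
    (hdiff : Differentiable ℝ f)
    (S : Set (EuclideanSpace ℝ (Fin d)))
    (hS : S = {z | ∀ y, f z ≤ f y}) (hSne : S.Nonempty)
    (hfstar : ∀ z ∈ S, f z = fstar)
    (p : EuclideanSpace ℝ (Fin d) → EuclideanSpace ℝ (Fin d))
    (hproj : ∀ x, p x ∈ S ∧ ∀ y ∈ S, ‖x - p x‖ ≤ ‖x - y‖)
    (hWSC : ∀ x, f x + ⟪gradient f x, p x - x⟫ + μ / 2 * ‖p x - x‖ ^ 2 ≤ fstar) :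
    ∀ x, μ / 2 * ‖x - p x‖ ^ 2 ≤ ⟪gradient f x, x - p x⟫ := by
  intro x
  have hpS := (hproj x).1
  have hmin : ∀ y, f (p x) ≤ f y := by rw [hS] at hpS; exact hpS
  have hfs : fstar ≤ f x := (hfstar _ hpS) ▸ hmin x
  have h := hWSC x
  have hin : ⟪gradient f x, p x - x⟫ = -⟪gradient f x, x - p x⟫ := by
    rw [← inner_neg_right, neg_sub]
  have hnorm : ‖p x - x‖ = ‖x - p x‖ := norm_sub_rev _ _
  rw [hin, hnorm] at h
  linarith
end

section
/- The function f(x) = x² + 3 sin²(x) on ℝ satisfies the Polyak-Łojasiewicz inequality (1/2)(f'(x))² ≥ (1/32)(f(x) − f*) for all x ∈ ℝ, where f* = 0. -/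
/-!
Since `f` is even and `f'` is odd it suffices to take `x ≥ 0`, and there `f'(x) = 2x + 3 sin 2x`
is bounded below on each of three ranges: by `2x` while `sin 2x ≥ 0` (`x ≤ π/2`), by
`3π - 4x` just past `π/2` (as `sin t = -sin (t - π) ≥ π - t` for `t ≥ π`), and by `2x - 3`
afterwards. Compared with `f(x) ≤ 4x²` resp. `f(x) ≤ x² + 3`, each bound gives `f ≤ 16 f'²`.
-/

open Real

lemma hasDerivAt_sq_add_three_mul_sin_sq (x : ℝ) :
    HasDerivAt (fun y : ℝ => y ^ 2 + 3 * sin y ^ 2) (2 * x + 3 * sin (2 * x)) x := by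
  refine ((hasDerivAt_pow 2 x).add (((hasDerivAt_sin x).fun_pow 2).const_mul 3)).congr_deriv ?_
  rw [sin_two_mul]
  push_cast
  ring

lemma Real.pi_sub_le_sin {t : ℝ} (ht : π ≤ t) : π - t ≤ sin t := by
  have h := sin_le (sub_nonneg.2 ht)
  rw [sin_sub_pi] at h
  linarith

lemma sq_add_three_mul_sin_sq_le_of_nonneg {x : ℝ} (hx : 0 ≤ x) :
    x ^ 2 + 3 * sin x ^ 2 ≤ 16 * (2 * x + 3 * sin (2 * x)) ^ 2 := by
  have hsin_sq := sin_sq_le_sq (x := x)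
  have hsin_sq_one := sin_sq_le_one x
  have hpi := pi_gt_d2
  rcases le_or_gt x (π / 2) with hx₁ | hx₁
  · have h : 2 * x ≤ 2 * x + 3 * sin (2 * x) := by
      have := sin_nonneg_of_nonneg_of_le_pi (x := 2 * x) (by linarith) (by linarith)
      linarith
    nlinarith
  rcases le_or_gt x 2 with hx₂ | hx₂
  · have h : 3 * π - 4 * x ≤ 2 * x + 3 * sin (2 * x) := by
      have := pi_sub_le_sin (t := 2 * x) (by linarith)
      linarith
    nlinarith
  · have h : 2 * x - 3 ≤ 2 * x + 3 * sin (2 * x) := by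
      have := neg_one_le_sin (2 * x)
      linarith
    nlinarith

lemma sq_add_three_mul_sin_sq_le (x : ℝ) :
    x ^ 2 + 3 * sin x ^ 2 ≤ 16 * (2 * x + 3 * sin (2 * x)) ^ 2 := by
  rcases le_total 0 x with hx | hx
  · exact sq_add_three_mul_sin_sq_le_of_nonneg hx
  · have h := sq_add_three_mul_sin_sq_le_of_nonneg (neg_nonneg.2 hx)
    simpa only [neg_sq, sin_neg, mul_neg, ← neg_add] using h

theorem example_invex_function_satisfies_PL :
    ∀ x : ℝ, (1 / 32) * ((x ^ 2 + 3 * Real.sin x ^ 2) - 0) ≤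
      1 / 2 * (deriv (fun y : ℝ => y ^ 2 + 3 * Real.sin y ^ 2) x) ^ 2 := by
  intro x
  rw [(hasDerivAt_sq_add_three_mul_sin_sq x).deriv]
  linarith [sq_add_three_mul_sin_sq_le x]
end

section
/- If f: ℝ^d → ℝ has a coordinate-wise L-Lipschitz continuous gradient and satisfies the PL inequality with constant μ > 0, then randomized coordinate descent with step size 1/L (choosing coordinate i_k uniformly at random and updating x_{k+1} = x_k − (1/L)∇_{i_k} f(x_k) e_{i_k}) satisfies E[f(x_k) − f*] ≤ (1 − μ/(dL))^k (f(x_0) − f*). -/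
/-!
The descent lemma along coordinate `i` with step `1/L` gives
`f (x⁺) ≤ f x - (∂ᵢ f x)² / (2L)`. Summing over the `d` coordinates and using
`‖∇f x‖² = ∑ᵢ (∂ᵢ f x)²` together with PL, the sum over one random step of the optimality gap is
at most `(d - μ/L)` times the current gap. Iterating this bound along the tree of all coordinate
sequences of length `k` and dividing by `d ^ k` (uniform averaging) gives the rate
`(1 - μ/(dL)) ^ k`.
-/

open RealInnerProductSpace

/-- One step of coordinate descent with step size `1/L` on coordinate `i`. -/
noncomputable def cdStep {d : ℕ} (f : EuclideanSpace ℝ (Fin d) → ℝ) (L : ℝ)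
    (x : EuclideanSpace ℝ (Fin d)) (i : Fin d) : EuclideanSpace ℝ (Fin d) :=
  x - (gradient f x i / L) • EuclideanSpace.single i (1 : ℝ)

section Iterates

variable {α β M : Type*} [Fintype β]

theorem sum_foldl_ofFn_succ [AddCommMonoid M] (T : α → β → α) (V : α → M) (x : α) (k : ℕ) :
    ∑ ω : Fin (k + 1) → β, V (List.foldl T x (List.ofFn ω)) =
      ∑ b, ∑ ω : Fin k → β, V (List.foldl T (T x b) (List.ofFn ω)) := by
  rw [← Fintype.sum_prod_type', ← (Fin.consEquiv fun _ => β).sum_comp]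
  simp [List.ofFn_succ]

theorem sum_foldl_ofFn_le_pow_mul (T : α → β → α) (V : α → ℝ) {c : ℝ} (hc : 0 ≤ c)
    (hT : ∀ x, ∑ b, V (T x b) ≤ c * V x) (k : ℕ) (x : α) :
    ∑ ω : Fin k → β, V (List.foldl T x (List.ofFn ω)) ≤ c ^ k * V x := by
  induction k generalizing x with
  | zero => simp
  | succ k ih =>
    calc ∑ ω : Fin (k + 1) → β, V (List.foldl T x (List.ofFn ω))
        = ∑ b, ∑ ω : Fin k → β, V (List.foldl T (T x b) (List.ofFn ω)) :=
          sum_foldl_ofFn_succ T V x k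
      _ ≤ ∑ b, c ^ k * V (T x b) := Finset.sum_le_sum fun b _ => ih (T x b)
      _ = c ^ k * ∑ b, V (T x b) := (Finset.mul_sum ..).symm
      _ ≤ c ^ k * (c * V x) := by gcongr; exact hT x
      _ = c ^ (k + 1) * V x := by ring

end Iterates

section CoordinateDescent

variable {d : ℕ} {f : EuclideanSpace ℝ (Fin d) → ℝ} {L : ℝ}

theorem cdStep_le (hL : L ≠ 0)
    (hlip : ∀ (x : EuclideanSpace ℝ (Fin d)) (i : Fin d) (α : ℝ),
      f (x + α • EuclideanSpace.single i (1 : ℝ)) ≤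
        f x + α * gradient f x i + L / 2 * α ^ 2)
    (x : EuclideanSpace ℝ (Fin d)) (i : Fin d) :
    f (cdStep f L x i) ≤ f x - gradient f x i ^ 2 / (2 * L) := by
  have key := hlip x i (-(gradient f x i / L))
  rw [neg_smul, ← sub_eq_add_neg] at key
  exact key.trans_eq (by field_simp; ring)

theorem sum_cdStep_sub_le {μ fstar : ℝ} (hL : 0 < L)
    (hlip : ∀ (x : EuclideanSpace ℝ (Fin d)) (i : Fin d) (α : ℝ),
      f (x + α • EuclideanSpace.single i (1 : ℝ)) ≤
        f x + α * gradient f x i + L / 2 * α ^ 2)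
    (hPL : ∀ x, μ * (f x - fstar) ≤ 1 / 2 * ‖gradient f x‖ ^ 2) (x : EuclideanSpace ℝ (Fin d)) :
    ∑ i, (f (cdStep f L x i) - fstar) ≤ (d - μ / L) * (f x - fstar) := by
  have hPLx := hPL x
  rw [EuclideanSpace.real_norm_sq_eq] at hPLx
  calc ∑ i, (f (cdStep f L x i) - fstar)
      ≤ ∑ i, (f x - fstar - gradient f x i ^ 2 / (2 * L)) :=
        Finset.sum_le_sum fun i _ => by linarith [cdStep_le hL.ne' hlip x i]
    _ = d * (f x - fstar) - (∑ i, gradient f x i ^ 2) / (2 * L) := by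
        rw [Finset.sum_sub_distrib, ← Finset.sum_div]; simp [mul_sub]
    _ ≤ (d - μ / L) * (f x - fstar) := by
        have hPL_div : μ * (f x - fstar) / L ≤ (∑ i, gradient f x i ^ 2) / (2 * L) := by
          rw [div_le_div_iff₀ hL (by positivity)]; nlinarith
        rw [sub_mul, div_mul_eq_mul_div]; linarith

end CoordinateDescent

theorem randomized_coordinate_descent_PL_general
    {d : ℕ} (hd : 0 < d) (f : EuclideanSpace ℝ (Fin d) → ℝ) (L μ fstar : ℝ)
    (hL : 0 < L)
    (hlip : ∀ (x : EuclideanSpace ℝ (Fin d)) (i : Fin d) (α : ℝ),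
      f (x + α • EuclideanSpace.single i (1 : ℝ)) ≤
        f x + α * gradient f x i + L / 2 * α ^ 2)
    (hmin : ∃ z, f z = fstar ∧ ∀ y, fstar ≤ f y)
    (hPL : ∀ x, μ * (f x - fstar) ≤ 1 / 2 * ‖gradient f x‖ ^ 2)
    (x0 : EuclideanSpace ℝ (Fin d)) :
    ∀ k : ℕ,
      (∑ ω : Fin k → Fin d, (f (List.foldl (cdStep f L) x0 (List.ofFn ω)) - fstar))
          / (d : ℝ) ^ k
        ≤ (1 - μ / (d * L)) ^ k * (f x0 - fstar) := by
  intro k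
  obtain ⟨_, -, hlb⟩ := hmin
  have hcontract := sum_cdStep_sub_le hL hlip hPL
  by_cases hconst : ∀ y, f y = fstar
  · simp [hconst]
  obtain ⟨y, hy⟩ := not_forall.mp hconst
  -- All summands on the left of `hcontract y` are nonnegative, so the factor must be too.
  have hfactor : 0 ≤ (d : ℝ) - μ / L := by
    have hgap : 0 < f y - fstar := sub_pos.mpr ((hlb y).lt_of_ne' hy)
    have hprod := (Finset.sum_nonneg fun i _ => sub_nonneg.mpr (hlb (cdStep f L y i))).trans
      (hcontract y)
    exact nonneg_of_mul_nonneg_left hprod hgap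
  have hfactor_eq : (1 - μ / (d * L)) ^ k = ((d : ℝ) - μ / L) ^ k / (d : ℝ) ^ k := by
    rw [← div_pow]; field_simp
  rw [hfactor_eq, div_mul_eq_mul_div]
  gcongr
  exact sum_foldl_ofFn_le_pow_mul (cdStep f L) (fun x => f x - fstar) hfactor hcontract k x0

theorem randomized_coordinate_descent_PL
    {d : ℕ} (hd : 0 < d) (f : EuclideanSpace ℝ (Fin d) → ℝ) (L μ fstar : ℝ)
    (hL : 0 < L) (hμ : 0 < μ)
    (hdiff : Differentiable ℝ f)
    (hlip : ∀ (x : EuclideanSpace ℝ (Fin d)) (i : Fin d) (α : ℝ),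
      f (x + α • EuclideanSpace.single i (1 : ℝ)) ≤
        f x + α * gradient f x i + L / 2 * α ^ 2)
    (hmin : ∃ z, f z = fstar ∧ ∀ y, fstar ≤ f y)
    (hPL : ∀ x, μ * (f x - fstar) ≤ 1 / 2 * ‖gradient f x‖ ^ 2)
    (x0 : EuclideanSpace ℝ (Fin d)) :
    ∀ k : ℕ,
      (∑ ω : Fin k → Fin d, (f (List.foldl (cdStep f L) x0 (List.ofFn ω)) - fstar))
          / (d : ℝ) ^ k
        ≤ (1 - μ / (d * L)) ^ k * (f x0 - fstar) :=
  randomized_coordinate_descent_PL_general hd f L μ fstar hL hlip hmin hPL x0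
end

section
/- If f: ℝ^d → ℝ has a coordinate-wise L-Lipschitz continuous gradient and satisfies the PL inequality in the infinity norm, (1/2)‖∇f(x)‖_∞² ≥ μ₁(f(x) − f*), then greedy (Gauss-Southwell) coordinate descent with step size 1/L, which at each iteration updates the coordinate i_k = argmax_j |∇_j f(x_k)|, satisfies f(x_k) − f* ≤ (1 − μ₁/L)^k (f(x_0) − f*). -/
open RealInnerProductSpace

theorem greedy_coordinate_descent_PL
    {d : ℕ} (hd : 0 < d) (f : EuclideanSpace ℝ (Fin d) → ℝ) (L μ₁ fstar : ℝ)
    (hL : 0 < L) (hμ₁ : 0 < μ₁)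
    (hdiff : Differentiable ℝ f)
    (hlip : ∀ (x : EuclideanSpace ℝ (Fin d)) (i : Fin d) (α : ℝ),
      f (x + α • EuclideanSpace.single i (1 : ℝ)) ≤
        f x + α * gradient f x i + L / 2 * α ^ 2)
    (hmin : ∃ z, f z = fstar ∧ ∀ y, fstar ≤ f y)
    (hPLinf : ∀ x, μ₁ * (f x - fstar) ≤ 1 / 2 * (⨆ j, |gradient f x j|) ^ 2)
    (x : ℕ → EuclideanSpace ℝ (Fin d))
    (hx : ∀ k, ∃ i : Fin d, (∀ j, |gradient f (x k) j| ≤ |gradient f (x k) i|) ∧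
      x (k + 1) = x k - (gradient f (x k) i / L) • EuclideanSpace.single i (1 : ℝ)) :
    ∀ k, f (x k) - fstar ≤ (1 - μ₁ / L) ^ k * (f (x 0) - fstar) := by
  obtain ⟨z, hz, hlb⟩ := hmin
  haveI : Nonempty (Fin d) := ⟨⟨0, hd⟩⟩
  -- one-step descent
  have step : ∀ k, f (x (k + 1)) - fstar ≤ (1 - μ₁ / L) * (f (x k) - fstar) := by
    intro k
    obtain ⟨i, hi, hupd⟩ := hx k
    set g := gradient f (x k) i with hg
    have hsup : (⨆ j, |gradient f (x k) j|) = |g| := by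
      apply le_antisymm (ciSup_le hi)
      exact le_ciSup (f := fun j => |gradient f (x k) j|)
        (Set.Finite.bddAbove (Set.finite_range _)) i
    have hPL : μ₁ * (f (x k) - fstar) ≤ 1 / 2 * g ^ 2 := by
      have := hPLinf (x k)
      rwa [hsup, sq_abs] at this
    have hdesc : f (x (k + 1)) ≤ f (x k) - g ^ 2 / (2 * L) := by
      have := hlip (x k) i (-(g / L))
      have heq : x k + (-(g / L)) • EuclideanSpace.single i (1 : ℝ) = x (k + 1) := by
        rw [hupd]; rw [neg_smul, ← sub_eq_add_neg]
      rw [heq] at this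
      have : f (x (k + 1)) ≤ f (x k) + (-(g / L)) * g + L / 2 * (-(g / L)) ^ 2 := this
      calc f (x (k + 1)) ≤ f (x k) + (-(g / L)) * g + L / 2 * (-(g / L)) ^ 2 := this
        _ = f (x k) - g ^ 2 / (2 * L) := by field_simp; ring
    have h1 : μ₁ * (f (x k) - fstar) / L ≤ g ^ 2 / (2 * L) := by
      rw [div_le_div_iff₀ hL (by positivity)]
      nlinarith [hPL]
    have heq : (1 - μ₁ / L) * (f (x k) - fstar) =
        (f (x k) - fstar) - μ₁ * (f (x k) - fstar) / L := by
      field_simp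
    rw [heq]
    linarith [hdesc, h1]
  intro k
  by_cases hc : 0 ≤ 1 - μ₁ / L
  · induction k with
    | zero => simp
    | succ k ih =>
      calc f (x (k + 1)) - fstar ≤ (1 - μ₁ / L) * (f (x k) - fstar) := step k
        _ ≤ (1 - μ₁ / L) * ((1 - μ₁ / L) ^ k * (f (x 0) - fstar)) :=
            mul_le_mul_of_nonneg_left ih hc
        _ = (1 - μ₁ / L) ^ (k + 1) * (f (x 0) - fstar) := by ring
  · -- then all iterates are at the minimum
    push_neg at hc
    have hall : ∀ k, f (x k) = fstar := by
      intro k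
      induction k with
      | zero =>
        have h0 := step 0
        have hge := hlb (x 1)
        have hge0 := hlb (x 0)
        nlinarith
      | succ k ih =>
        have h := step k
        rw [ih] at h
        have hge := hlb (x (k + 1))
        linarith [h, mul_nonpos_of_nonpos_of_nonneg (le_of_lt hc) (le_refl (0:ℝ))]
    rw [hall k, hall 0]
    simp
end

section
/- Given the one-step inequality E[f(x_{k+1}) − f*] ≤ (1 − 2α_k μ)(f(x_k) − f*) + LC²α_k²/2 with α_k = (2k+1)/(2μ(k+1)²), the sequence δ(k) = k² E[f(x_k) − f*] satisfies δ(k+1) ≤ δ(k) + LC²/(2μ²), and hence E[f(x_k) − f*] ≤ LC²/(2kμ²). -/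
theorem sgd_decreasing_step_recursion
    (L μ C : ℝ) (hL : 0 < L) (hμ : 0 < μ) (hC : 0 < C)
    (α : ℕ → ℝ)
    (hα : ∀ k : ℕ, α k = (2 * (k : ℝ) + 1) / (2 * μ * ((k : ℝ) + 1) ^ 2))
    (e : ℕ → ℝ) (he : ∀ k, 0 ≤ e k)
    (hrec : ∀ k : ℕ, e (k + 1) ≤ (1 - 2 * α k * μ) * e k + L * C ^ 2 * (α k) ^ 2 / 2) :
    (∀ k : ℕ, ((k : ℝ) + 1) ^ 2 * e (k + 1) ≤ (k : ℝ) ^ 2 * e k + L * C ^ 2 / (2 * μ ^ 2))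
      ∧ ∀ k : ℕ, 1 ≤ k → e k ≤ L * C ^ 2 / (2 * (k : ℝ) * μ ^ 2) := by
  have hstep : ∀ k : ℕ, ((k : ℝ) + 1) ^ 2 * e (k + 1) ≤ (k : ℝ) ^ 2 * e k + L * C ^ 2 / (2 * μ ^ 2) := by
    intro k
    have hk : (0:ℝ) ≤ (k:ℝ) := Nat.cast_nonneg k
    have hk1 : (0:ℝ) < ((k:ℝ)+1)^2 := by positivity
    have hμ' : μ ≠ 0 := ne_of_gt hμ
    have h1 : (1 - 2 * α k * μ) = (k:ℝ)^2 / ((k:ℝ)+1)^2 := by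
      rw [hα]; field_simp; ring
    have hα2 : (α k) ^ 2 ≤ 1 / (μ^2 * ((k:ℝ)+1)^2) := by
      rw [hα, div_pow, div_le_div_iff₀ (by positivity) (by positivity)]
      have hb : (2*(k:ℝ)+1)^2 ≤ 4*((k:ℝ)+1)^2 := by nlinarith
      nlinarith [mul_le_mul_of_nonneg_right hb
        (show (0:ℝ) ≤ μ^2 * ((k:ℝ)+1)^2 by positivity)]
    have h2 : L * C ^ 2 * (α k) ^ 2 / 2 ≤ L * C ^ 2 / (2 * μ ^ 2 * ((k:ℝ)+1)^2) := by
      calc L * C ^ 2 * (α k) ^ 2 / 2 ≤ L * C ^ 2 * (1 / (μ^2 * ((k:ℝ)+1)^2)) / 2 := by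
            gcongr
        _ = L * C ^ 2 / (2 * μ ^ 2 * ((k:ℝ)+1)^2) := by
            field_simp
    have hr := hrec k
    rw [h1] at hr
    have := mul_le_mul_of_nonneg_left hr hk1.le
    calc ((k:ℝ)+1)^2 * e (k+1)
        ≤ ((k:ℝ)+1)^2 * ((k:ℝ)^2 / ((k:ℝ)+1)^2 * e k + L * C ^ 2 * (α k) ^ 2 / 2) := this
      _ ≤ ((k:ℝ)+1)^2 * ((k:ℝ)^2 / ((k:ℝ)+1)^2 * e k + L * C ^ 2 / (2 * μ ^ 2 * ((k:ℝ)+1)^2)) := by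
          apply mul_le_mul_of_nonneg_left _ hk1.le
          linarith
      _ = (k:ℝ)^2 * e k + L * C ^ 2 / (2 * μ ^ 2) := by
          field_simp
  refine ⟨hstep, ?_⟩
  have hδ : ∀ k : ℕ, (k:ℝ)^2 * e k ≤ (k:ℝ) * (L * C ^ 2 / (2 * μ ^ 2)) := by
    intro k
    induction k with
    | zero => simp
    | succ n ih =>
      have := hstep n
      push_cast
      push_cast at ih this
      linarith
  intro k hk1
  have hkpos : (0:ℝ) < (k:ℝ) := by exact_mod_cast hk1
  have h := hδ k
  have h2 : (k:ℝ) * e k ≤ L * C ^ 2 / (2 * μ ^ 2) :=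
    le_of_mul_le_mul_left (by nlinarith) hkpos
  rw [le_div_iff₀ (by positivity)]
  calc e k * (2 * (k:ℝ) * μ ^ 2) = ((k:ℝ) * e k) * (2 * μ ^ 2) := by ring
    _ ≤ (L * C ^ 2 / (2 * μ ^ 2)) * (2 * μ ^ 2) :=
        mul_le_mul_of_nonneg_right h2 (by positivity)
    _ = L * C ^ 2 := by field_simp
end

section
/- Let f(x) = h(Ax) where h is σ-strongly convex and A is a matrix, and suppose the solution set 𝒳* of minimizing f is nonempty. Then f satisfies (with x_p the projection of x onto 𝒳*): f* ≥ f(x) + ⟨∇f(x), x_p − x⟩ + (σ/2)‖A(x_p − x)‖², and consequently f satisfies the PL inequality (1/2)‖∇f(x)‖² ≥ σθ(A)(f(x) − f*), where θ(A) is the smallest non-zero singular value of A squared (i.e., the Hoffman constant bound ‖A(x_p − x)‖² ≥ θ(A)‖x_p − x‖² holds on the relevant set). -/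
open RealInnerProductSpace

theorem strongly_convex_composed_linear_PL
    {d m : ℕ} (h : EuclideanSpace ℝ (Fin m) → ℝ)
    (A : EuclideanSpace ℝ (Fin d) →L[ℝ] EuclideanSpace ℝ (Fin m))
    (f : EuclideanSpace ℝ (Fin d) → ℝ) (σ θ fstar : ℝ)
    (hσ : 0 < σ) (hθ : 0 < θ)
    (hdiff : Differentiable ℝ h)
    (hsc : ∀ u v, h u + ⟪gradient h u, v - u⟫ + σ / 2 * ‖v - u‖ ^ 2 ≤ h v)
    (hf : ∀ x, f x = h (A x))
    (S : Set (EuclideanSpace ℝ (Fin d)))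
    (hS : S = {z | ∀ y, f z ≤ f y}) (hSne : S.Nonempty)
    (zstar : EuclideanSpace ℝ (Fin m)) (hSaffine : S = {x | A x = zstar})
    (hfstar : ∀ z ∈ S, f z = fstar)
    (p : EuclideanSpace ℝ (Fin d) → EuclideanSpace ℝ (Fin d))
    (hproj : ∀ x, p x ∈ S ∧ ∀ y ∈ S, ‖x - p x‖ ≤ ‖x - y‖)
    (hhoffman : ∀ x, θ * ‖p x - x‖ ^ 2 ≤ ‖A (p x - x)‖ ^ 2) :
    (∀ x, f x + ⟪gradient f x, p x - x⟫ + σ / 2 * ‖A (p x - x)‖ ^ 2 ≤ fstar)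
      ∧ ∀ x, σ * θ * (f x - fstar) ≤ 1 / 2 * ‖gradient f x‖ ^ 2 := by
  have hfeq : f = fun x => h (A x) := funext hf
  have hgrad : ∀ x v, ⟪gradient f x, v⟫ = ⟪gradient h (A x), A v⟫ := by
    intro x v
    have hdf : HasFDerivAt f ((fderiv ℝ h (A x)).comp A) x := by
      rw [hfeq]
      exact (hdiff (A x)).hasFDerivAt.comp x A.hasFDerivAt
    rw [gradient, gradient, hdf.fderiv, InnerProductSpace.toDual_symm_apply,
      InnerProductSpace.toDual_symm_apply]
    rfl
  have part1 : ∀ x, f x + ⟪gradient f x, p x - x⟫ + σ / 2 * ‖A (p x - x)‖ ^ 2 ≤ fstar := by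
    intro x
    have hmem := (hproj x).1
    have hfp : f (p x) = fstar := hfstar _ hmem
    have hkey := hsc (A x) (A (p x))
    have hAsub : A (p x) - A x = A (p x - x) := (map_sub A _ _).symm
    rw [hAsub] at hkey
    rw [hf x, hgrad x (p x - x)]
    rw [hf (p x)] at hfp
    linarith
  refine ⟨part1, fun x => ?_⟩
  have h1 := part1 x
  have h2 := hhoffman x
  have h3 : -(‖gradient f x‖ * ‖p x - x‖) ≤ ⟪gradient f x, p x - x⟫ :=
    neg_le_of_abs_le (abs_real_inner_le_norm _ _)
  set g := ‖gradient f x‖ with hg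
  set t := ‖p x - x‖ with ht
  have h4 : σ / 2 * (θ * t ^ 2) ≤ σ / 2 * ‖A (p x - x)‖ ^ 2 :=
    mul_le_mul_of_nonneg_left h2 (by linarith)
  have h5 : f x - fstar ≤ g * t - σ * θ / 2 * t ^ 2 := by linarith
  have h6 : σ * θ * (f x - fstar) ≤ σ * θ * (g * t - σ * θ / 2 * t ^ 2) :=
    mul_le_mul_of_nonneg_left h5 (le_of_lt (mul_pos hσ hθ))
  nlinarith [sq_nonneg (g - σ * θ * t)]
end
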